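/- arXiv:cs/0601014 — 3 statements merged into one kernel-verified Lean document; each statement's English description precedes it below -/
import Mathlib

section
/- If R₁ and R₂ are strong probabilistic bisimulations on Con, then the reflexive-transitive closure of R₁ ∪ R₂ is also a strong probabilistic bisimulation. More generally, for any family (Rᵢ)_{i∈I} of strong probabilistic bisimulations, the reflexive-transitive closure (⋃ᵢ Rᵢ)* is a strong probabilistic bisimulation. -/
/-- A finite-support probability distribution on `Con`. -/
structure FDist (Con : Type) where
  f : Con → ℝ
  nonneg : ∀ c, 0 ≤ f c
  le_one : ∀ c, f c ≤ 1
  finSupp : (Function.support f).Finite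
  sum_one : ∑ᶠ c, f c = 1

/-- The mass a distribution assigns to a set: μ(M) = Σ_{c ∈ M} μ(c). -/
noncomputable def FDist.mass {Con : Type} (μ : FDist Con) (M : Set Con) : ℝ :=
  ∑ᶠ c ∈ M, μ.f c

/-- Combined transition: convex closure of the transition relation `tr`. -/
def CTrans {Con Act : Type} (tr : Con → Act → FDist Con → Prop)
    (C : Con) (a : Act) (μ : FDist Con) : Prop :=
  ∃ (n : ℕ) (p : Fin n → ℝ) (μs : Fin n → FDist Con),
    (∀ i, 0 < p i ∧ p i ≤ 1) ∧ (∑ i, p i) = 1 ∧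
    (∀ i, tr C a (μs i)) ∧ (∀ d, μ.f d = ∑ i, p i * (μs i).f d)

/-- μ ≡_R ν : the distributions agree on every R-equivalence class. -/
def DistEquivRel {Con : Type} (R : Con → Con → Prop) (μ ν : FDist Con) : Prop :=
  ∀ c : Con, μ.mass {d | R c d} = ν.mass {d | R c d}

/-- A configuration with no outgoing transitions. -/
def Terminal {Con Act : Type} (tr : Con → Act → FDist Con → Prop) (C : Con) : Prop :=
  ∀ a μ, ¬ tr C a μ

/-- Strong probabilistic bisimulation. -/
def IsStrongBisim {Con Act S : Type} (tr : Con → Act → FDist Con → Prop)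
    (ctx : Con → S) (R : Con → Con → Prop) : Prop :=
  Equivalence R ∧ ∀ C D, R C D →
    ((∀ a μ, tr C a μ → ∃ ν, CTrans tr D a ν ∧ DistEquivRel R μ ν) ∧
     (Terminal tr C → ctx C = ctx D))

/-- Strong probabilistic bisimilarity: union of all strong probabilistic bisimulations. -/
def SBisim {Con Act S : Type} (tr : Con → Act → FDist Con → Prop)
    (ctx : Con → S) (C D : Con) : Prop :=
  ∃ R, IsStrongBisim tr ctx R ∧ R C D

/-!
Every step of `ReflTransGen U` lies in a bisimulation `R ≤ U`, so a transition can be matched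
step by step along a chain. Matching a combined transition through `R` gives a convex mixture of
combined transitions, which is again one, and the two distributions agree on `R`-classes, hence
on the coarser classes of the closure, each of which is a disjoint union of `R`-classes.
Termination and the context are transported along the chain in the same way.
-/

open Function Set

lemma finsum_mem_eq_sum_filter_of_support_subset {α M : Type*} [AddCommMonoid M] (f : α → M)
    {F : Finset α} (hF : support f ⊆ F) (s : Set α) [DecidablePred (· ∈ s)] :
    ∑ᶠ a ∈ s, f a = ∑ a ∈ F with a ∈ s, f a :=
  finsum_mem_eq_sum_of_subset f (fun a ha => by simpa [ha.1] using hF ha.2)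
    (fun a ha => (Finset.mem_filter.1 ha).2)

lemma Equivalence.setOf_eq_setOf_iff {α : Type*} {R : α → α → Prop} (hR : Equivalence R)
    {a b : α} : {x | R a x} = {x | R b x} ↔ R b a :=
  ⟨fun h => h.subset (hR.refl a),
    fun h => Set.ext fun _ => ⟨hR.trans h, hR.trans (hR.symm h)⟩⟩

namespace FDist

variable {Con : Type}

noncomputable def mix {ι : Type} [Fintype ι] (p : ι → ℝ) (hp : ∀ i, 0 ≤ p i)
    (hsum : ∑ i, p i = 1) (μs : ι → FDist Con) : FDist Con where
  f d := ∑ i, p i * (μs i).f d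
  nonneg d := Finset.sum_nonneg fun i _ => mul_nonneg (hp i) ((μs i).nonneg d)
  le_one d := calc
    ∑ i, p i * (μs i).f d ≤ ∑ i, p i * 1 :=
      Finset.sum_le_sum fun i _ => mul_le_mul_of_nonneg_left ((μs i).le_one d) (hp i)
    _ = 1 := by simp [hsum]
  finSupp := HasFiniteSupport.sum
    (fun i => (μs i).finSupp.subset (support_mul_subset_right _ _)) Finset.univ
  sum_one := by
    rw [finsum_sum_comm _ _ fun i _ => (μs i).finSupp.subset (support_mul_subset_right _ _)]
    simp_rw [← mul_finsum, sum_one, mul_one, hsum]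

lemma mass_eq_sum_mul_mass {ι : Type} [Fintype ι] {p : ι → ℝ} {μs : ι → FDist Con}
    {ν : FDist Con} (hν : ∀ d, ν.f d = ∑ i, p i * (μs i).f d) (M : Set Con) :
    ν.mass M = ∑ i, p i * (μs i).mass M := by
  classical
  let F := (Set.finite_iUnion fun i => (μs i).finSupp).toFinset
  have hF : ∀ i, support (μs i).f ⊆ F := fun i d hd => by simpa [F] using ⟨i, hd⟩
  have hνF : support ν.f ⊆ F := by
    rw [funext hν]
    refine (Finset.support_sum _ _).trans (Set.iUnion₂_subset fun i _ => ?_)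
    exact (support_mul_subset_right _ _).trans (hF i)
  rw [mass, finsum_mem_eq_sum_filter_of_support_subset _ hνF]
  simp only [hν]
  rw [Finset.sum_comm]
  refine Finset.sum_congr rfl fun i _ => ?_
  rw [mass, finsum_mem_eq_sum_filter_of_support_subset _ (hF i), Finset.mul_sum]

end FDist

section Transitions

variable {Con Act : Type} {tr : Con → Act → FDist Con → Prop} {C : Con} {a : Act}

lemma CTrans.single {μ : FDist Con} (h : tr C a μ) : CTrans tr C a μ :=
  ⟨1, fun _ => 1, fun _ => μ, fun _ => ⟨one_pos, le_rfl⟩, by simp, fun _ => h, by simp⟩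

lemma CTrans.not_terminal {μ : FDist Con} (h : CTrans tr C a μ) : ¬ Terminal tr C := by
  obtain ⟨n, p, μs, -, hsum, htr, -⟩ := h
  obtain ⟨i⟩ : Nonempty (Fin n) := by
    by_contra hn
    simp [not_nonempty_iff.1 hn] at hsum
  exact fun hC => hC a (μs i) (htr i)

lemma CTrans.of_fintype {ι : Type} [Fintype ι] {p : ι → ℝ} (hp : ∀ i, 0 < p i)
    (hsum : ∑ i, p i = 1) {μs : ι → FDist Con} (htr : ∀ i, tr C a (μs i)) {μ : FDist Con}
    (hμ : ∀ d, μ.f d = ∑ i, p i * (μs i).f d) : CTrans tr C a μ := by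
  let e := Fintype.equivFin ι
  refine ⟨Fintype.card ι, p ∘ e.symm, μs ∘ e.symm, fun i => ⟨hp _, ?_⟩, ?_, fun i => htr _,
    fun d => ?_⟩
  · exact hsum ▸ Finset.single_le_sum (fun j _ => (hp j).le) (Finset.mem_univ _)
  · simpa only [Function.comp_apply, e.symm.sum_comp] using hsum
  · simpa only [Function.comp_apply, e.symm.sum_comp (fun i => p i * (μs i).f d)] using hμ d

lemma CTrans.mix {ι : Type} [Fintype ι] {p : ι → ℝ} (hp : ∀ i, 0 < p i)
    (hsum : ∑ i, p i = 1) {νs : ι → FDist Con} (hν : ∀ i, CTrans tr C a (νs i))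
    {ν : FDist Con} (hf : ∀ d, ν.f d = ∑ i, p i * (νs i).f d) : CTrans tr C a ν := by
  choose m q ρ hq hqsum hρ hνρ using hν
  refine CTrans.of_fintype (ι := Σ i, Fin (m i)) (p := fun x => p x.1 * q x.1 x.2)
    (fun x => mul_pos (hp x.1) (hq x.1 x.2).1) ?_ (fun x => hρ x.1 x.2) fun d => ?_
  · simp only [← Finset.univ_sigma_univ, Finset.sum_sigma, ← Finset.mul_sum, hqsum, mul_one,
      hsum]
  · simp only [hf, hνρ, ← Finset.univ_sigma_univ, Finset.sum_sigma, Finset.mul_sum, mul_assoc]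

end Transitions

lemma DistEquivRel.mono {Con : Type} {R R' : Con → Con → Prop} (hR : Equivalence R)
    (hR' : Equivalence R') (hle : R ≤ R') {μ ν : FDist Con} (h : DistEquivRel R μ ν) :
    DistEquivRel R' μ ν := by
  classical
  intro c₀
  let M := {d | R' c₀ d}
  let G := (μ.finSupp.union ν.finSupp).toFinset
  -- An `R'`-class is the disjoint union of the `R`-classes of its points.
  have hsplit : ∀ ρ : FDist Con, support ρ.f ⊆ support μ.f ∪ support ν.f →
      ρ.mass M = ∑ N ∈ (G.filter (· ∈ M)).image fun c => {d | R c d}, ρ.mass N := by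
    intro ρ hρ
    have hρG : support ρ.f ⊆ G := by simpa [G] using hρ
    rw [FDist.mass, finsum_mem_eq_sum_filter_of_support_subset _ hρG]
    refine (Finset.sum_image' _ fun c hc => ?_).symm
    have hcM : R' c₀ c := (Finset.mem_filter.1 hc).2
    rw [FDist.mass, finsum_mem_eq_sum_filter_of_support_subset _ hρG, Finset.filter_filter]
    refine Finset.sum_congr (Finset.filter_congr fun d _ => ?_) fun _ _ => rfl
    rw [hR.setOf_eq_setOf_iff]
    exact ⟨fun hcd => ⟨hR'.trans hcM (hle _ _ hcd), hcd⟩, And.right⟩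
  rw [hsplit μ subset_union_left, hsplit ν subset_union_right]
  refine Finset.sum_congr rfl fun N hN => ?_
  obtain ⟨c, -, rfl⟩ := Finset.mem_image.1 hN
  exact h c

namespace IsStrongBisim

variable {Con Act S : Type} {tr : Con → Act → FDist Con → Prop} {ctx : Con → S}
  {R : Con → Con → Prop} {C D : Con}

lemma exists_cTrans (hR : IsStrongBisim tr ctx R) (hCD : R C D) {a : Act} {μ : FDist Con}
    (hμ : CTrans tr C a μ) : ∃ ν, CTrans tr D a ν ∧ DistEquivRel R μ ν := by
  obtain ⟨n, p, μs, hp, hsum, htr, hμf⟩ := hμ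
  choose νs hν hμν using fun i => (hR.2 C D hCD).1 a (μs i) (htr i)
  refine ⟨FDist.mix p (fun i => (hp i).1.le) hsum νs,
    CTrans.mix (fun i => (hp i).1) hsum hν fun _ => rfl, fun c => ?_⟩
  rw [FDist.mass_eq_sum_mul_mass hμf, FDist.mass_eq_sum_mul_mass (p := p) (μs := νs) fun _ => rfl]
  exact Finset.sum_congr rfl fun i _ => by rw [hμν i c]

lemma terminal (hR : IsStrongBisim tr ctx R) (hCD : R C D) (hC : Terminal tr C) :
    Terminal tr D := fun a μ hμ =>
  let ⟨_, hν, _⟩ := (hR.2 D C (hR.1.symm hCD)).1 a μ hμ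
  hν.not_terminal hC

end IsStrongBisim

section ReflTransGen

open Relation

variable {Con Act S : Type} {tr : Con → Act → FDist Con → Prop} {ctx : Con → S}
  {U : Con → Con → Prop}

lemma equivalence_reflTransGen
    (hU : ∀ C D, U C D → ∃ R, IsStrongBisim tr ctx R ∧ R ≤ U ∧ R C D) :
    Equivalence (ReflTransGen U) :=
  haveI : Std.Symm U := ⟨fun C D hCD =>
    let ⟨_, hR, hRU, h⟩ := hU C D hCD
    hRU _ _ (hR.1.symm h)⟩
  ⟨fun _ => .refl, fun h => Std.Symm.symm _ _ h, .trans⟩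

lemma exists_cTrans_of_reflTransGen
    (hU : ∀ C D, U C D → ∃ R, IsStrongBisim tr ctx R ∧ R ≤ U ∧ R C D) {C D : Con}
    (hCD : ReflTransGen U C D) {a : Act} {μ : FDist Con} (hμ : CTrans tr C a μ) :
    ∃ ν, CTrans tr D a ν ∧ DistEquivRel (ReflTransGen U) μ ν := by
  induction hCD with
  | refl => exact ⟨μ, hμ, fun _ => rfl⟩
  | tail _ hUbc ih =>
    obtain ⟨ν, hν, hμν⟩ := ih
    obtain ⟨R, hR, hRU, hbc⟩ := hU _ _ hUbc
    obtain ⟨ν', hν', hνν'⟩ := hR.exists_cTrans hbc hν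
    have hRle : R ≤ ReflTransGen U := fun _ _ h => .single (hRU _ _ h)
    exact ⟨ν', hν', fun c => (hμν c).trans
      (hνν'.mono hR.1 (equivalence_reflTransGen hU) hRle c)⟩

lemma terminal_of_reflTransGen
    (hU : ∀ C D, U C D → ∃ R, IsStrongBisim tr ctx R ∧ R ≤ U ∧ R C D) {C D : Con}
    (hCD : ReflTransGen U C D) (hC : Terminal tr C) : Terminal tr D ∧ ctx C = ctx D := by
  induction hCD with
  | refl => exact ⟨hC, rfl⟩
  | tail _ hUbc ih =>
    obtain ⟨R, hR, -, hbc⟩ := hU _ _ hUbc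
    exact ⟨hR.terminal hbc ih.1, ih.2.trans ((hR.2 _ _ hbc).2 ih.1)⟩

theorem isStrongBisim_reflTransGen
    (hU : ∀ C D, U C D → ∃ R, IsStrongBisim tr ctx R ∧ R ≤ U ∧ R C D) :
    IsStrongBisim tr ctx (ReflTransGen U) :=
  ⟨equivalence_reflTransGen hU, fun _ _ hCD =>
    ⟨fun _ _ hμ => exists_cTrans_of_reflTransGen hU hCD (.single hμ),
      fun hC => (terminal_of_reflTransGen hU hCD hC).2⟩⟩

end ReflTransGen

/-- the reflexive-transitive closure of a union of strong
probabilistic bisimulations is a strong probabilistic bisimulation (binary case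
and the general family case). -/
theorem stmt_6 {Con Act S : Type} (tr : Con → Act → FDist Con → Prop) (ctx : Con → S)
    (R1 R2 : Con → Con → Prop)
    (h1 : IsStrongBisim tr ctx R1) (h2 : IsStrongBisim tr ctx R2)
    {I : Type} (R : I → Con → Con → Prop) (hR : ∀ i, IsStrongBisim tr ctx (R i)) :
    IsStrongBisim tr ctx (Relation.ReflTransGen (fun a b => R1 a b ∨ R2 a b)) ∧
    IsStrongBisim tr ctx (Relation.ReflTransGen (fun a b => ∃ i, R i a b)) := by
  refine ⟨isStrongBisim_reflTransGen ?_, isStrongBisim_reflTransGen ?_⟩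
  · rintro C D (h | h)
    exacts [⟨R1, h1, fun _ _ => Or.inl, h⟩, ⟨R2, h2, fun _ _ => Or.inr, h⟩]
  · rintro C D ⟨i, h⟩
    exact ⟨R i, hR i, fun _ _ hi => ⟨i, hi⟩, h⟩
end

section
/- Strong bisimilarity of configurations is preserved by combined transitions: if C ∼ D, then whenever C ⇒_α μ (a combined α-transition), there exists ν such that D ⇒_α ν and μ ≡_∼ ν. -/
section Aux

variable {Con Act S : Type}

open scoped Classical

/-- Mass as a finite sum over any finset containing the support. -/
lemma FDist.mass_eq_sum (μ : FDist Con) {T : Finset Con}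
    (hT : Function.support μ.f ⊆ ↑T) (M : Set Con) :
    μ.mass M = ∑ x ∈ T.filter (· ∈ M), μ.f x := by
  have hfin : (M ∩ Function.support μ.f).Finite :=
    μ.finSupp.subset Set.inter_subset_right
  rw [FDist.mass, finsum_mem_eq_sum μ.f hfin]
  refine Finset.sum_subset ?_ ?_
  · intro x hx
    simp only [Set.Finite.mem_toFinset, Set.mem_inter_iff] at hx
    exact Finset.mem_filter.2 ⟨Finset.mem_coe.1 (hT hx.2), hx.1⟩
  · intro x hx hnx
    by_contra h0
    apply hnx
    simp only [Set.Finite.mem_toFinset, Set.mem_inter_iff]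
    exact ⟨(Finset.mem_filter.1 hx).2, h0⟩

/-- Mass of a convex combination. -/
lemma FDist.mass_convex (μ : FDist Con) {n : ℕ} (p : Fin n → ℝ)
    (μs : Fin n → FDist Con) (hf : ∀ d, μ.f d = ∑ i, p i * (μs i).f d) (M : Set Con) :
    μ.mass M = ∑ i, p i * (μs i).mass M := by
  have hfin : (Function.support μ.f ∪ ⋃ i, Function.support (μs i).f).Finite :=
    μ.finSupp.union (Set.finite_iUnion fun i => (μs i).finSupp)
  have hTμ : Function.support μ.f ⊆ ↑hfin.toFinset := by
    intro x hx; rw [Set.Finite.coe_toFinset]; exact Or.inl hx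
  have hTi : ∀ i, Function.support (μs i).f ⊆ ↑hfin.toFinset := by
    intro i x hx; rw [Set.Finite.coe_toFinset]; exact Or.inr (Set.mem_iUnion.2 ⟨i, hx⟩)
  rw [μ.mass_eq_sum hTμ M]
  have h2 : ∀ i, (μs i).mass M = ∑ x ∈ hfin.toFinset.filter (· ∈ M), (μs i).f x :=
    fun i => (μs i).mass_eq_sum (hTi i) M
  calc ∑ x ∈ hfin.toFinset.filter (· ∈ M), μ.f x
      = ∑ x ∈ hfin.toFinset.filter (· ∈ M), ∑ i, p i * (μs i).f x :=
        Finset.sum_congr rfl fun x _ => hf x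
    _ = ∑ i, ∑ x ∈ hfin.toFinset.filter (· ∈ M), p i * (μs i).f x := Finset.sum_comm
    _ = ∑ i, p i * (μs i).mass M := by
        refine Finset.sum_congr rfl fun i _ => ?_
        rw [h2 i, Finset.mul_sum]

/-- Convex mixture of finitely many distributions. -/
noncomputable def fmix {n : ℕ} (p : Fin n → ℝ) (hp : ∀ i, 0 ≤ p i)
    (hs : ∑ i, p i = 1) (μs : Fin n → FDist Con) : FDist Con where
  f d := ∑ i, p i * (μs i).f d
  nonneg d := Finset.sum_nonneg fun i _ => mul_nonneg (hp i) ((μs i).nonneg d)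
  le_one d := by
    calc ∑ i, p i * (μs i).f d ≤ ∑ i, p i :=
          Finset.sum_le_sum fun i _ => mul_le_of_le_one_right (hp i) ((μs i).le_one d)
      _ = 1 := hs
  finSupp := by
    apply (Set.finite_iUnion fun i => (μs i).finSupp).subset
    intro d hd
    rw [Function.mem_support] at hd
    obtain ⟨i, -, hi⟩ := Finset.exists_ne_zero_of_sum_ne_zero hd
    exact Set.mem_iUnion.2 ⟨i, Function.mem_support.2 (right_ne_zero_of_mul hi)⟩
  sum_one := by
    have hfin : (⋃ i, Function.support (μs i).f).Finite :=
      Set.finite_iUnion fun i => (μs i).finSupp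
    have hsub : Function.support (fun d => ∑ i, p i * (μs i).f d) ⊆ ↑hfin.toFinset := by
      intro d hd
      rw [Function.mem_support] at hd
      obtain ⟨i, -, hi⟩ := Finset.exists_ne_zero_of_sum_ne_zero hd
      rw [Set.Finite.coe_toFinset]
      exact Set.mem_iUnion.2 ⟨i, Function.mem_support.2 (right_ne_zero_of_mul hi)⟩
    rw [finsum_eq_finset_sum_of_support_subset _ hsub, Finset.sum_comm]
    have key : ∀ i : Fin n, ∑ d ∈ hfin.toFinset, p i * (μs i).f d = p i := by
      intro i
      have hsub' : Function.support (μs i).f ⊆ ↑hfin.toFinset := by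
        intro d hd; rw [Set.Finite.coe_toFinset]; exact Set.mem_iUnion.2 ⟨i, hd⟩
      rw [← Finset.mul_sum, ← finsum_eq_finset_sum_of_support_subset _ hsub',
        (μs i).sum_one, mul_one]
    rw [Finset.sum_congr rfl fun i _ => key i]
    exact hs

lemma ctrans_single {tr : Con → Act → FDist Con → Prop} {C : Con} {a : Act}
    {μ : FDist Con} (h : tr C a μ) : CTrans tr C a μ :=
  ⟨1, fun _ => 1, fun _ => μ, fun _ => ⟨one_pos, le_refl 1⟩, by simp, fun _ => h,
    fun d => by simp⟩

lemma ctrans_not_terminal {tr : Con → Act → FDist Con → Prop} {C : Con} {a : Act}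
    {μ : FDist Con} (h : CTrans tr C a μ) : ¬ Terminal tr C := by
  obtain ⟨n, p, μs, hp, hs, htr, -⟩ := h
  intro hT
  have hn : n ≠ 0 := by rintro rfl; simp at hs
  exact hT a (μs ⟨0, Nat.pos_of_ne_zero hn⟩) (htr _)

/-- `CTrans` is closed under convex combinations. -/
lemma ctrans_mix {tr : Con → Act → FDist Con → Prop} {D : Con} {a : Act} {n : ℕ}
    (p : Fin n → ℝ) (hp : ∀ i, 0 < p i ∧ p i ≤ 1) (hs : ∑ i, p i = 1)
    (νs : Fin n → FDist Con) (hν : ∀ i, CTrans tr D a (νs i)) {ν : FDist Con}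
    (hf : ∀ d, ν.f d = ∑ i, p i * (νs i).f d) : CTrans tr D a ν := by
  choose m q ξ hq hqs htr hξf using hν
  let ι := Σ i : Fin n, Fin (m i)
  let e : Fin (Fintype.card ι) ≃ ι := (Fintype.equivFin ι).symm
  refine ⟨Fintype.card ι, fun k => p (e k).1 * q (e k).1 (e k).2,
    fun k => ξ (e k).1 (e k).2, ?_, ?_, fun k => htr _ _, ?_⟩
  · intro k
    exact ⟨mul_pos (hp _).1 (hq _ _).1,
      mul_le_one₀ (hp _).2 (hq _ _).1.le (hq _ _).2⟩
  · rw [Equiv.sum_comp e (fun s : ι => p s.1 * q s.1 s.2), ← Finset.univ_sigma_univ,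
      Finset.sum_sigma]
    calc ∑ i, ∑ j, p i * q i j = ∑ i, p i := by
          refine Finset.sum_congr rfl fun i _ => ?_
          rw [← Finset.mul_sum, hqs i, mul_one]
      _ = 1 := hs
  · intro d
    rw [hf d,
      Equiv.sum_comp e (fun s : ι => (p s.1 * q s.1 s.2) * (ξ s.1 s.2).f d),
      ← Finset.univ_sigma_univ, Finset.sum_sigma]
    refine Finset.sum_congr rfl fun i _ => ?_
    rw [hξf i d, Finset.mul_sum]
    exact Finset.sum_congr rfl fun j _ => by ring

/-- Core lemma: a bisimulation matches combined transitions by combined transitions. -/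
lemma bisim_ctrans {tr : Con → Act → FDist Con → Prop} {ctx : Con → S}
    {R : Con → Con → Prop} (hR : IsStrongBisim tr ctx R) {C D : Con} (hCD : R C D)
    {a : Act} {μ : FDist Con} (hμ : CTrans tr C a μ) :
    ∃ ν, CTrans tr D a ν ∧ DistEquivRel R μ ν := by
  obtain ⟨n, p, μs, hp, hs, htr, hf⟩ := hμ
  choose νs hct heq using fun i => (hR.2 C D hCD).1 a (μs i) (htr i)
  refine ⟨fmix p (fun i => (hp i).1.le) hs νs,
    ctrans_mix p hp hs νs hct (fun d => rfl), fun c => ?_⟩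
  rw [μ.mass_convex p μs hf, (fmix p (fun i => (hp i).1.le) hs νs).mass_convex p νs
    (fun d => rfl)]
  exact Finset.sum_congr rfl fun i _ => by rw [heq i c]

/-- Masses of `R`-equivalent distributions agree on `R`-closed sets. -/
lemma mass_eq_of_closed {R : Con → Con → Prop} (hR : Equivalence R) {μ ν : FDist Con}
    (h : DistEquivRel R μ ν) {M : Set Con}
    (hM : ∀ ⦃d d'⦄, R d d' → d ∈ M → d' ∈ M) : μ.mass M = ν.mass M := by
  letI s : Setoid Con := ⟨R, hR⟩
  have hfin := μ.finSupp.union ν.finSupp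
  have hTμ : Function.support μ.f ⊆ ↑hfin.toFinset := by
    intro x hx; rw [Set.Finite.coe_toFinset]; exact Or.inl hx
  have hTν : Function.support ν.f ⊆ ↑hfin.toFinset := by
    intro x hx; rw [Set.Finite.coe_toFinset]; exact Or.inr hx
  set F := hfin.toFinset.filter (· ∈ M) with hF
  have key : ∀ (ρ : FDist Con), Function.support ρ.f ⊆ ↑hfin.toFinset →
      ∑ x ∈ F, ρ.f x = ∑ y ∈ F.image (Quotient.mk s), ρ.mass {d | R y.out d} := by
    intro ρ hρ
    classical
    rw [← Finset.sum_fiberwise_of_maps_to (t := F.image (Quotient.mk s))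
      (g := Quotient.mk s) (fun x hx => Finset.mem_image_of_mem _ hx) ρ.f]
    refine Finset.sum_congr rfl fun y hy => ?_
    rw [ρ.mass_eq_sum hρ]
    refine (Finset.sum_congr ?_ fun _ _ => rfl).symm
    ext x
    simp only [hF, Finset.mem_filter, Set.mem_setOf_eq]
    constructor
    · rintro ⟨hxT, hRyx⟩
      have hxy : Quotient.mk s x = y := by
        rw [← Quotient.out_eq y]; exact (Quotient.sound hRyx).symm
      obtain ⟨x0, hx0F, hx0y⟩ := Finset.mem_image.1 hy
      have hx0M : x0 ∈ M := (Finset.mem_filter.1 hx0F).2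
      have hRx0x : R x0 x := Quotient.exact (hx0y.trans hxy.symm)
      exact ⟨⟨hxT, hM hRx0x hx0M⟩, hxy⟩
    · rintro ⟨⟨hxT, _⟩, hxy⟩
      refine ⟨hxT, ?_⟩
      exact Quotient.exact ((Quotient.out_eq y).trans hxy.symm)
  rw [μ.mass_eq_sum hTμ M, ν.mass_eq_sum hTν M, ← hF, key μ hTμ, key ν hTν]
  exact Finset.sum_congr rfl fun y _ => h _

/-- Strong bisimilarity is transitive. -/
lemma sbisim_trans {tr : Con → Act → FDist Con → Prop} {ctx : Con → S} {C D E : Con}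
    (h1 : SBisim tr ctx C D) (h2 : SBisim tr ctx D E) : SBisim tr ctx C E := by
  obtain ⟨R1, hR1, hCD⟩ := h1
  obtain ⟨R2, hR2, hDE⟩ := h2
  let r : Con → Con → Prop := fun x y => R1 x y ∨ R2 x y
  have hEq : Equivalence (Relation.EqvGen r) := Relation.EqvGen.is_equivalence r
  have hcl : ∀ (Ri : Con → Con → Prop), (∀ x y, Ri x y → r x y) → ∀ c, ∀ ⦃d d'⦄,
      Ri d d' → Relation.EqvGen r c d → Relation.EqvGen r c d' :=
    fun Ri hi c d d' hdd' hcd => hEq.trans hcd (Relation.EqvGen.rel _ _ (hi _ _ hdd'))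
  have base : ∀ (Ri : Con → Con → Prop), IsStrongBisim tr ctx Ri →
      (∀ x y, Ri x y → r x y) → ∀ {x y : Con}, Ri x y →
      ∀ a μ, CTrans tr x a μ → ∃ ν, CTrans tr y a ν ∧ DistEquivRel (Relation.EqvGen r) μ ν := by
    intro Ri hRi hir x y hxy a μ hμ
    obtain ⟨ν, hν, heq⟩ := bisim_ctrans hRi hxy hμ
    exact ⟨ν, hν, fun c => mass_eq_of_closed hRi.1 heq
      (fun d d' hdd' hd => hcl Ri hir c hdd' hd)⟩
  have main : ∀ x y, Relation.EqvGen r x y →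
      (((∀ a μ, CTrans tr x a μ → ∃ ν, CTrans tr y a ν ∧ DistEquivRel (Relation.EqvGen r) μ ν) ∧
        (Terminal tr x → ctx x = ctx y)) ∧
       ((∀ a μ, CTrans tr y a μ → ∃ ν, CTrans tr x a ν ∧ DistEquivRel (Relation.EqvGen r) μ ν) ∧
        (Terminal tr y → ctx y = ctx x))) := by
    intro x y hxy
    induction hxy with
    | rel x y hxy =>
      rcases hxy with h | h
      · exact ⟨⟨base R1 hR1 (fun _ _ => Or.inl) h, fun ht => (hR1.2 _ _ h).2 ht⟩,
          ⟨base R1 hR1 (fun _ _ => Or.inl) (hR1.1.symm h),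
            fun ht => (hR1.2 _ _ (hR1.1.symm h)).2 ht⟩⟩
      · exact ⟨⟨base R2 hR2 (fun _ _ => Or.inr) h, fun ht => (hR2.2 _ _ h).2 ht⟩,
          ⟨base R2 hR2 (fun _ _ => Or.inr) (hR2.1.symm h),
            fun ht => (hR2.2 _ _ (hR2.1.symm h)).2 ht⟩⟩
    | refl x =>
      exact ⟨⟨fun a μ hμ => ⟨μ, hμ, fun c => rfl⟩, fun _ => rfl⟩,
        ⟨fun a μ hμ => ⟨μ, hμ, fun c => rfl⟩, fun _ => rfl⟩⟩
    | symm x y _ ih => exact ⟨ih.2, ih.1⟩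
    | trans x y z _ _ ih1 ih2 =>
      refine ⟨⟨?_, ?_⟩, ?_, ?_⟩
      · intro a μ hμ
        obtain ⟨ν1, hν1, he1⟩ := ih1.1.1 a μ hμ
        obtain ⟨ν2, hν2, he2⟩ := ih2.1.1 a ν1 hν1
        exact ⟨ν2, hν2, fun c => (he1 c).trans (he2 c)⟩
      · intro ht
        have hty : Terminal tr y := by
          intro b ξ hbξ
          obtain ⟨ν, hν, -⟩ := ih1.2.1 b ξ (ctrans_single hbξ)
          exact ctrans_not_terminal hν ht
        exact (ih1.1.2 ht).trans (ih2.1.2 hty)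
      · intro a μ hμ
        obtain ⟨ν1, hν1, he1⟩ := ih2.2.1 a μ hμ
        obtain ⟨ν2, hν2, he2⟩ := ih1.2.1 a ν1 hν1
        exact ⟨ν2, hν2, fun c => (he1 c).trans (he2 c)⟩
      · intro ht
        have hty : Terminal tr y := by
          intro b ξ hbξ
          obtain ⟨ν, hν, -⟩ := ih2.1.1 b ξ (ctrans_single hbξ)
          exact ctrans_not_terminal hν ht
        exact (ih2.2.2 ht).trans (ih1.2.2 hty)
  refine ⟨Relation.EqvGen r, ⟨hEq, fun X Y hXY => ?_⟩,
    hEq.trans (Relation.EqvGen.rel _ _ (Or.inl hCD)) (Relation.EqvGen.rel _ _ (Or.inr hDE))⟩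
  obtain ⟨⟨ha, hb⟩, -⟩ := main X Y hXY
  exact ⟨fun a μ hμ => ha a μ (ctrans_single hμ), hb⟩

end Aux

/-- strong bisimilarity matches combined transitions by combined
transitions with ≡_∼-equivalent targets. -/
theorem stmt_8 {Con Act S : Type} (tr : Con → Act → FDist Con → Prop) (ctx : Con → S)
    (C D : Con) (h : SBisim tr ctx C D) (a : Act) (μ : FDist Con)
    (hμ : CTrans tr C a μ) :
    ∃ ν, CTrans tr D a ν ∧ DistEquivRel (SBisim tr ctx) μ ν := by
  obtain ⟨R, hR, hCD⟩ := h
  obtain ⟨ν, hν, heq⟩ := bisim_ctrans hR hCD hμ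
  refine ⟨ν, hν, fun c => ?_⟩
  refine mass_eq_of_closed hR.1 heq ?_
  intro d d' hdd' hd
  exact sbisim_trans hd ⟨R, hR, hdd'⟩
end

section
/- The probability of an execution fragment under the convex combination adversary satisfies P_A(f) = p·P_{A₁}(f) + (1−p)·P_{A₂}(f) for all execution fragments f starting at C, where A is constructed from adversaries A₁, A₂ by A(f) = (pP_{A₁}(f)/P_A(f))·A₁(f) + (1 − pP_{A₁}(f)/P_A(f))·A₂(f) when P_A(f) ≠ 0, and A(f) = p·A₁(f) + (1−p)·A₂(f) otherwise. -/
/-- Execution fragments C₀α₁C₁…αₙCₙ. -/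
inductive Frag (Con Act : Type) where
  | single : Con → Frag Con Act
  | step : Frag Con Act → Act → Con → Frag Con Act

def Frag.head {Con Act : Type} : Frag Con Act → Con
  | .single C => C
  | .step f _ _ => f.head

def Frag.tail {Con Act : Type} : Frag Con Act → Con
  | .single C => C
  | .step _ _ C => C

/-- The action string of an execution fragment. -/
def Frag.acts {Con Act : Type} : Frag Con Act → List Act
  | .single _ => []
  | .step f a _ => f.acts ++ [a]

/-- Each step of the fragment is witnessed by a combined transition giving the
next configuration positive probability. -/
def IsExec {Con Act : Type} (tr : Con → Act → FDist Con → Prop) : Frag Con Act → Prop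
  | .single _ => True
  | .step f a C => IsExec tr f ∧ ∃ μ, CTrans tr f.tail a μ ∧ 0 < μ.f C

/-- An adversary: to each fragment it assigns a finite-support distribution over
combined transitions from the fragment's tail, with distinct actions (hence
represented as a weight `prob f a` and a target distribution `target f a` for
each action `a`). -/
structure Adversary (Con Act : Type) (tr : Con → Act → FDist Con → Prop) where
  prob : Frag Con Act → Act → ℝ
  target : Frag Con Act → Act → FDist Con
  nonneg : ∀ f a, 0 ≤ prob f a
  finSupp : ∀ f, (Function.support (prob f)).Finite
  sum_one : ∀ f, ∑ᶠ a, prob f a = 1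
  valid : ∀ f a, 0 < prob f a → CTrans tr f.tail a (target f a)

/-- P_A(f): the probability of the execution fragment f according to adversary A
(0 when f does not coincide with A, 1 on single-configuration fragments). -/
noncomputable def fragProb {Con Act : Type} {tr : Con → Act → FDist Con → Prop}
    (A : Adversary Con Act tr) : Frag Con Act → ℝ
  | .single _ => 1
  | .step f a C => fragProb A f * (A.prob f a * (A.target f a).f C)

open Classical in
/-- Weak s-transition C ⟹_s μ via an adversary: the fragments from C to each
D ∈ Supp(μ) that coincide with A carry total probability μ(D), and every such
fragment's action string has the form τ*α₁τ*…τ*αₙτ*. -/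
def WeakTrans {Con Act : Type} (tr : Con → Act → FDist Con → Prop) (tau : Act)
    (C : Con) (s : List Act) (μ : FDist Con) : Prop :=
  ∃ A : Adversary Con Act tr,
    ∀ D ∈ Function.support μ.f,
      ((∑' f : {f : Frag Con Act // f.head = C ∧ f.tail = D}, fragProb A f.1) = μ.f D) ∧
      (∀ f : Frag Con Act, f.head = C → f.tail = D → 0 < fragProb A f →
        f.acts.filter (fun b => decide (b ≠ tau)) = s.filter (fun b => decide (b ≠ tau)))

open Classical in
/-- α̂ : deletes τ. -/
noncomputable def hat {Act : Type} (tau a : Act) : List Act :=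
  if a = tau then [] else [a]

/-- Weak probabilistic bisimulation. -/
def IsWeakBisim {Con Act S : Type} (tr : Con → Act → FDist Con → Prop) (tau : Act)
    (ctx : Con → S) (R : Con → Con → Prop) : Prop :=
  Equivalence R ∧ ∀ C D, R C D →
    ((∀ a μ, tr C a μ → ∃ ν, WeakTrans tr tau D (hat tau a) ν ∧ DistEquivRel R μ ν) ∧
     (Terminal tr C → Terminal tr D → ctx C = ctx D))

/-- Weak probabilistic bisimilarity: union of all weak probabilistic bisimulations. -/
def WBisim {Con Act S : Type} (tr : Con → Act → FDist Con → Prop) (tau : Act)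
    (ctx : Con → S) (C D : Con) : Prop :=
  ∃ R, IsWeakBisim tr tau ctx R ∧ R C D

/-- if A is the convex-combination adversary built from A₁ and A₂
with weight p (as in the proof of closure of weak transitions under convex
combination), then P_A(f) = p·P_{A₁}(f) + (1−p)·P_{A₂}(f) for every execution
fragment f starting at C. -/
theorem stmt_12 {Con Act : Type} (tr : Con → Act → FDist Con → Prop) (C : Con)
    (A A1 A2 : Adversary Con Act tr) (p : ℝ) (hp0 : 0 < p) (hp1 : p ≤ 1)
    (q : Frag Con Act → ℝ)
    (hq : ∀ f, q f = if fragProb A f ≠ 0 then p * fragProb A1 f / fragProb A f else p)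
    (hprob : ∀ f a, A.prob f a = q f * A1.prob f a + (1 - q f) * A2.prob f a)
    (htarget : ∀ f a d,
      A.prob f a * (A.target f a).f d
        = q f * A1.prob f a * (A1.target f a).f d
          + (1 - q f) * A2.prob f a * (A2.target f a).f d) :
    ∀ f : Frag Con Act, f.head = C → IsExec tr f →
      fragProb A f = p * fragProb A1 f + (1 - p) * fragProb A2 f := by
  have hnn : ∀ (B : Adversary Con Act tr) (f : Frag Con Act), 0 ≤ fragProb B f := by
    intro B f
    induction f with
    | single c => simp [fragProb]
    | step g a c ih =>
      exact mul_nonneg ih (mul_nonneg (B.nonneg g a) ((B.target g a).nonneg c))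
  intro f
  induction f with
  | single c => intro _ _; simp [fragProb]
  | step g a c ih =>
    intro hh hex
    have hg := ih hh hex.1
    simp only [fragProb]
    rw [htarget]
    by_cases h0 : fragProb A g = 0
    · have hq0 : q g = p := by rw [hq]; simp [h0]
      have h1 : p * fragProb A1 g = 0 ∧ (1 - p) * fragProb A2 g = 0 := by
        constructor
        · nlinarith [hnn A1 g, hnn A2 g, mul_nonneg (sub_nonneg.2 hp1) (hnn A2 g),
            mul_nonneg hp0.le (hnn A1 g)]
        · nlinarith [hnn A1 g, hnn A2 g, mul_nonneg (sub_nonneg.2 hp1) (hnn A2 g),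
            mul_nonneg hp0.le (hnn A1 g)]
      have h1' : fragProb A1 g = 0 := by
        have := h1.1; nlinarith
      rw [h0, hq0, h1']
      linear_combination (-1) * A2.prob g a * (A2.target g a).f c * h1.2
    · have hqg : q g = p * fragProb A1 g / fragProb A g := by rw [hq]; simp [h0]
      have e1 : fragProb A g * q g = p * fragProb A1 g := by
        rw [hqg]; field_simp
      have e2 : fragProb A g * (1 - q g) = (1 - p) * fragProb A2 g := by
        have : fragProb A g * (1 - q g) = fragProb A g - fragProb A g * q g := by ring
        rw [this, e1, hg]; ring
      calc fragProb A g * (q g * A1.prob g a * (A1.target g a).f c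
              + (1 - q g) * A2.prob g a * (A2.target g a).f c)
          = (fragProb A g * q g) * (A1.prob g a * (A1.target g a).f c)
            + (fragProb A g * (1 - q g)) * (A2.prob g a * (A2.target g a).f c) := by ring
        _ = p * (fragProb A1 g * (A1.prob g a * (A1.target g a).f c))
            + (1 - p) * (fragProb A2 g * (A2.prob g a * (A2.target g a).f c)) := by
            rw [e1, e2]; ring
end
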